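/- arXiv:1709.05372 — 4 statements merged into one kernel-verified Lean document; each statement's English description precedes it below -/
import Mathlib

section
/- Let G be a countable discrete group and let f be an n×n matrix over ℂ[G]. If ξ₁, ξ₂ ∈ M_n(ℓ²(G)) both satisfy fξ₁ = 1̂ and fξ₂ = 1̂, then ξ₁ = ξ₂; i.e., the ℓ² formal inverse of f, when it exists, is unique. -/
open scoped Classical ENNReal

noncomputable section

/-- Convolution of a finitely supported `a : ℂ[G]` with `ξ : G → ℂ`:
`(a*ξ)(g) = ∑_{h} a(h) ξ(h⁻¹g)`. -/
def fconv {G : Type*} [Group G] (a : G →₀ ℂ) (ξ : G → ℂ) : G → ℂ :=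
  fun g => a.sum fun h c => c * ξ (h⁻¹ * g)

/-- The matrix `1̂ ∈ M_n(ℓ²(G))` with diagonal entries `δ_e` and zero off-diagonal entries. -/
def oneHat (G : Type*) [Group G] (n : ℕ) : Matrix (Fin n) (Fin n) (G → ℂ) :=
  fun i j g => if i = j ∧ g = 1 then 1 else 0

/-- `(fξ)_{ij} = ∑_k f_{ik} * ξ_{kj}`. -/
def matConv {G : Type*} [Group G] {n : ℕ} (f : Matrix (Fin n) (Fin n) (G →₀ ℂ))
    (ξ : Matrix (Fin n) (Fin n) (G → ℂ)) : Matrix (Fin n) (Fin n) (G → ℂ) :=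
  fun i j => ∑ k, fconv (f i k) (ξ k j)

/-!
`f` acts on `ℓ²(G)ⁿ` by a bounded operator `P` commuting with right translations, and the
columns of a formal inverse are mapped by `P` onto the vectors `δ_e eᵢ`, whose right translates
span a dense subspace; hence `P†` is injective, and it suffices to show that `P` is injective.
On the commutant of the right translations, `τ(A) = ∑ᵢ ⟪δ_e eᵢ, A (δ_e eᵢ)⟫` is a faithful trace.
For small `r > 0`, `C = 1 - r P†P` and `C' = 1 - r PP†` are contractions with fixed spaces
`ker P` and `ker P† = 0`, and `τ(Cᵏ) = τ(C'ᵏ)` by the trace property. By the mean ergodic theorem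
the Cesàro means of `Cᵏ` and `C'ᵏ` converge strongly to the projections onto `ker P` and `0`,
so the projection onto `ker P` has trace `0`, and by faithfulness `ker P = 0`.
-/

open ContinuousLinearMap Filter Topology Finset RCLike
open scoped ComplexConjugate InnerProductSpace

section TracialPowers

variable {R A : Type*} [CommRing R] [Ring A] [Algebra R A]

theorem trace_one_sub_smul_mul_pow_comm (τ : A →ₗ[R] R) (S : Subalgebra R A)
    (hτ : ∀ a ∈ S, ∀ b ∈ S, τ (a * b) = τ (b * a)) {p q : A} (hp : p ∈ S) (hq : q ∈ S)
    (r : R) (k : ℕ) : τ ((1 - r • (q * p)) ^ k) = τ ((1 - r • (p * q)) ^ k) := by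
  induction k with
  | zero => simp
  | succ k ih =>
    set X := (1 - r • (q * p)) ^ k
    set Y := (1 - r • (p * q)) ^ k
    have hX : X ∈ S := pow_mem (sub_mem (one_mem S) (S.smul_mem (mul_mem hq hp) r)) k
    have hqY : q * Y = X * q := by
      refine SemiconjBy.pow_right ?_ k
      simp only [SemiconjBy, mul_sub, sub_mul, mul_one, one_mul, mul_smul_comm, smul_mul_assoc,
        mul_assoc]
    calc τ ((1 - r • (q * p)) ^ (k + 1)) = τ X - r * τ (X * q * p) := by
          rw [pow_succ, mul_sub, mul_one, mul_smul_comm, map_sub, map_smul, mul_assoc, smul_eq_mul]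
      _ = τ Y - r * τ (p * q * Y) := by
          rw [ih, hτ _ (mul_mem hX hq) p hp, ← hqY, mul_assoc]
      _ = τ ((1 - r • (p * q)) ^ (k + 1)) := by
          rw [pow_succ', sub_mul, one_mul, smul_mul_assoc, map_sub, map_smul, smul_eq_mul]

end TracialPowers

section HilbertSpace

variable {𝕜 E ι : Type*} [RCLike 𝕜] [NormedAddCommGroup E] [InnerProductSpace 𝕜 E] [Fintype ι]

def diagTrace (δ : ι → E) : (E →L[𝕜] E) →ₗ[𝕜] 𝕜 where
  toFun A := ∑ i, ⟪δ i, A (δ i)⟫_𝕜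
  map_add' A B := by simp [inner_add_right, sum_add_distrib]
  map_smul' c A := by simp [inner_smul_right, mul_sum]

theorem diagTrace_apply (δ : ι → E) (A : E →L[𝕜] E) :
    diagTrace δ A = ∑ i, ⟪δ i, A (δ i)⟫_𝕜 := rfl

theorem mem_orthogonal_of_diagTrace_starProjection_eq_zero (K : Submodule 𝕜 E)
    [K.HasOrthogonalProjection] {δ : ι → E} (h : diagTrace δ K.starProjection = 0) (i : ι) :
    δ i ∈ Kᗮ := by
  have hre : ∑ i, re ⟪K.starProjection (δ i), δ i⟫_𝕜 = 0 := by
    simpa only [diagTrace_apply, map_sum, map_zero, inner_re_symm (δ _)] using congrArg re h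
  have hi := (sum_eq_zero_iff_of_nonneg fun j _ => K.re_inner_starProjection_nonneg (δ j)).mp
    hre i (mem_univ i)
  rw [K.re_inner_starProjection_eq_normSq, sq_eq_zero_iff, norm_eq_zero] at hi
  rw [← K.starProjection_apply_eq_zero_iff, K.starProjection_apply, hi, ZeroMemClass.coe_zero]

variable [CompleteSpace E]

theorem tendsto_diagTrace_average (δ : ι → E) {C : E →L[𝕜] E} (hC : ‖C‖ ≤ 1) :
    Tendsto (fun N : ℕ => diagTrace δ ((N : 𝕜)⁻¹ • ∑ k ∈ range N, C ^ k)) atTop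
      (𝓝 (diagTrace δ (C.eqLocus (1 : E →L[𝕜] E)).starProjection)) := by
  have h (i : ι) : Tendsto (fun N => ⟪δ i, birkhoffAverage 𝕜 C id N (δ i)⟫_𝕜) atTop
      (𝓝 ⟪δ i, (C.eqLocus (1 : E →L[𝕜] E)).starProjection (δ i)⟫_𝕜) :=
    tendsto_const_nhds.inner (C.tendsto_birkhoffAverage_orthogonalProjection hC (δ i))
  rw [diagTrace_apply]
  convert tendsto_finsetSum univ fun i _ => h i using 2 with N
  simp [diagTrace_apply, birkhoffAverage, birkhoffSum, inner_smul_right, inner_sum, mul_sum,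
    sum_comm (s := range N)]

theorem norm_one_sub_smul_adjoint_mul_self_le (P : E →L[𝕜] E) {r : ℝ} (hr : 0 ≤ r)
    (hrP : r * ‖P‖ ^ 2 ≤ 1) : ‖1 - (r : 𝕜) • (adjoint P * P)‖ ≤ 1 := by
  refine opNorm_le_bound _ zero_le_one fun v => ?_
  have hPv : ‖adjoint P (P v)‖ ≤ ‖P‖ * ‖P v‖ := by
    simpa only [LinearIsometryEquiv.norm_map] using (adjoint P).le_opNorm (P v)
  have hinner : re ⟪v, (r : 𝕜) • adjoint P (P v)⟫_𝕜 = r * ‖P v‖ ^ 2 := by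
    rw [inner_smul_right, adjoint_inner_right, inner_self_eq_norm_sq_to_K]
    norm_cast
  have hsq : ‖v - (r : 𝕜) • adjoint P (P v)‖ ^ 2 ≤ ‖v‖ ^ 2 := by
    rw [@norm_sub_sq 𝕜, hinner, norm_smul, norm_algebraMap', Real.norm_of_nonneg hr]
    have : (r * ‖adjoint P (P v)‖) ^ 2 ≤ r * ‖P v‖ ^ 2 := calc
      (r * ‖adjoint P (P v)‖) ^ 2 ≤ (r * (‖P‖ * ‖P v‖)) ^ 2 := by gcongr
      _ = (r * ‖P‖ ^ 2) * (r * ‖P v‖ ^ 2) := by ring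
      _ ≤ r * ‖P v‖ ^ 2 := mul_le_of_le_one_left (by positivity) hrP
    nlinarith [sq_nonneg ‖P v‖]
  simpa using pow_le_pow_iff_left₀ (norm_nonneg _) (norm_nonneg v) two_ne_zero |>.mp hsq

theorem eqLocus_one_sub_smul_adjoint_mul_self (P : E →L[𝕜] E) {r : ℝ} (hr : r ≠ 0) :
    (1 - (r : 𝕜) • (adjoint P * P)).eqLocus (1 : E →L[𝕜] E) = P.ker := by
  ext v
  rw [LinearMap.mem_eqLocus, ← ker_adjoint_comp_self, LinearMap.mem_ker]
  simp [sub_eq_self, hr]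

theorem tendsto_diagTrace_average_one_sub_smul_adjoint_mul_self (δ : ι → E) (P : E →L[𝕜] E)
    {r : ℝ} (hr : 0 < r) (hrP : r * ‖P‖ ^ 2 ≤ 1) :
    Tendsto (fun N : ℕ =>
        diagTrace δ ((N : 𝕜)⁻¹ • ∑ k ∈ range N, (1 - (r : 𝕜) • (adjoint P * P)) ^ k)) atTop
      (𝓝 (diagTrace δ P.ker.starProjection)) := by
  convert tendsto_diagTrace_average δ (norm_one_sub_smul_adjoint_mul_self_le P hr.le hrP)
    using 5
  exact (eqLocus_one_sub_smul_adjoint_mul_self P hr.ne').symm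

end HilbertSpace

section Translation

variable {α β : Type*}

def lpCompEquiv (e : α ≃ β) : lp (fun _ : β => ℂ) 2 ≃ₗᵢ[ℂ] lp (fun _ : α => ℂ) 2 where
  toFun x := ⟨x ∘ e, memℓp_gen <|
    ((lp.memℓp x).summable (by norm_num)).comp_injective e.injective⟩
  invFun x := ⟨x ∘ e.symm, memℓp_gen <|
    ((lp.memℓp x).summable (by norm_num)).comp_injective e.symm.injective⟩
  map_add' x y := rfl
  map_smul' c x := rfl
  left_inv x := by ext; simp
  right_inv x := by ext; simp
  norm_map' x := by
    simp only [lp.norm_eq_tsum_rpow (by norm_num : 0 < (2 : ℝ≥0∞).toReal)]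
    exact congrArg (· ^ _) (e.tsum_eq fun b => ‖x b‖ ^ (2 : ℝ≥0∞).toReal)

@[simp]
theorem lpCompEquiv_apply (e : α ≃ β) (x : lp (fun _ : β => ℂ) 2) (a : α) :
    lpCompEquiv e x a = x (e a) := rfl

end Translation

section GroupVonNeumannAlgebra

variable {G ι : Type*}

variable (G ι) in
abbrev L2Vec := PiLp 2 fun _ : ι => lp (fun _ : G => ℂ) 2

variable [Fintype ι]

theorem inner_eq_sum_tsum (x y : L2Vec G ι) : ⟪x, y⟫_ℂ = ∑ k, ∑' g, conj (x k g) * y k g := by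
  simp [PiLp.inner_apply, lp.inner_eq_tsum, mul_comm]

variable [Group G]

def rightTranslate (γ : G) : lp (fun _ : G => ℂ) 2 ≃ₗᵢ[ℂ] lp (fun _ : G => ℂ) 2 :=
  lpCompEquiv (Equiv.mulRight γ)

@[simp]
theorem rightTranslate_apply (γ : G) (x : lp (fun _ : G => ℂ) 2) (g : G) :
    rightTranslate γ x g = x (g * γ) := rfl

def convolutionCLM (a : G →₀ ℂ) : lp (fun _ : G => ℂ) 2 →L[ℂ] lp (fun _ : G => ℂ) 2 :=
  a.sum fun h c => c • (lpCompEquiv (Equiv.mulLeft h⁻¹) : _ →L[ℂ] _)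

theorem coe_convolutionCLM_apply (a : G →₀ ℂ) (x : lp (fun _ : G => ℂ) 2) :
    ⇑(convolutionCLM a x) = fconv a x := by
  ext g
  simp only [convolutionCLM, fconv, Finsupp.sum, FunLike.coe_sum, Finset.sum_apply, smul_apply]
  rw [lp.coeFn_sum, Finset.sum_apply]
  simp [lp.coeFn_smul]

theorem convolutionCLM_rightTranslate (a : G →₀ ℂ) (γ : G) (x : lp (fun _ : G => ℂ) 2) :
    convolutionCLM a (rightTranslate γ x) = rightTranslate γ (convolutionCLM a x) := by
  ext g
  simp [coe_convolutionCLM_apply, fconv, mul_assoc]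

def rightTranslateVec (γ : G) : L2Vec G ι ≃ₗᵢ[ℂ] L2Vec G ι :=
  LinearIsometryEquiv.piLpCongrRight 2 fun _ => rightTranslate γ

@[simp]
theorem rightTranslateVec_apply (γ : G) (x : L2Vec G ι) (i : ι) :
    rightTranslateVec γ x i = rightTranslate γ (x i) := rfl

theorem rightTranslateVec_symm (γ : G) :
    (rightTranslateVec γ).symm = (rightTranslateVec γ⁻¹ : L2Vec G ι ≃ₗᵢ[ℂ] L2Vec G ι) := by
  ext x : 1
  rw [LinearIsometryEquiv.symm_apply_eq]
  ext i g
  simp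

def matConvCLM (f : Matrix ι ι (G →₀ ℂ)) : L2Vec G ι →L[ℂ] L2Vec G ι :=
  (PiLp.continuousLinearEquiv 2 ℂ _).symm.toContinuousLinearMap.comp <|
    ContinuousLinearMap.pi fun i => ∑ k, (convolutionCLM (f i k)).comp (PiLp.proj 2 _ k)

@[simp]
theorem matConvCLM_apply (f : Matrix ι ι (G →₀ ℂ)) (x : L2Vec G ι) (i : ι) :
    matConvCLM f x i = ∑ k, convolutionCLM (f i k) (x k) := by
  simp [matConvCLM]

variable (G ι) in
/-- `Mₙ(L(G))` when `ι = Fin n`. -/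
def rightCommutant : StarSubalgebra ℂ (L2Vec G ι →L[ℂ] L2Vec G ι) :=
  StarSubalgebra.centralizer ℂ
    (Set.range fun γ : G => (rightTranslateVec (ι := ι) γ : L2Vec G ι →L[ℂ] L2Vec G ι))

theorem mem_rightCommutant {A : L2Vec G ι →L[ℂ] L2Vec G ι} :
    A ∈ rightCommutant G ι ↔ ∀ γ x, A (rightTranslateVec γ x) = rightTranslateVec γ (A x) := by
  simp only [rightCommutant, StarSubalgebra.mem_centralizer_iff, Set.forall_mem_range,
    star_eq_adjoint, LinearIsometryEquiv.adjoint_eq_symm, rightTranslateVec_symm]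
  refine ⟨fun h γ x => (congr($((h γ).1) x)).symm, fun h γ => ⟨?_, ?_⟩⟩ <;>
    exact ContinuousLinearMap.ext fun x => (h _ x).symm

theorem matConvCLM_mem_rightCommutant (f : Matrix ι ι (G →₀ ℂ)) :
    matConvCLM f ∈ rightCommutant G ι :=
  mem_rightCommutant.mpr fun γ x => by
    ext1 i
    simp [convolutionCLM_rightTranslate]

variable (G) in
def delta (i : ι) : L2Vec G ι := PiLp.single 2 i (lp.single 2 1 1)

theorem inner_delta_rightTranslateVec (i : ι) (γ : G) (y : L2Vec G ι) :
    ⟪delta G i, rightTranslateVec γ y⟫_ℂ = y i γ := by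
  rw [PiLp.inner_apply, sum_eq_single i (fun k _ hk => by simp [delta, hk]) (by simp)]
  simp [delta, lp.inner_single_left]

theorem adjoint_delta_apply {A : L2Vec G ι →L[ℂ] L2Vec G ι} (hA : A ∈ rightCommutant G ι)
    (i k : ι) (g : G) : adjoint A (delta G i) k g = conj (A (delta G k) i g⁻¹) := calc
  adjoint A (delta G i) k g = ⟪delta G k, rightTranslateVec g (adjoint A (delta G i))⟫_ℂ :=
    (inner_delta_rightTranslateVec k g _).symm
  _ = ⟪A (delta G k), rightTranslateVec g (delta G i)⟫_ℂ := by
    rw [← star_eq_adjoint, ← mem_rightCommutant.mp (star_mem hA), star_eq_adjoint,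
      adjoint_inner_right]
  _ = conj (A (delta G k) i g⁻¹) := by
    rw [← inner_conj_symm, LinearIsometryEquiv.inner_map_eq_flip, rightTranslateVec_symm,
      inner_delta_rightTranslateVec]

theorem diagTrace_mul_eq {A B : L2Vec G ι →L[ℂ] L2Vec G ι} (hA : A ∈ rightCommutant G ι) :
    diagTrace (delta G) (A * B) = ∑ i, ∑ k, ∑' g, A (delta G k) i g⁻¹ * B (delta G i) k g := by
  rw [diagTrace_apply]
  refine sum_congr rfl fun i _ => ?_
  rw [mul_apply_eq_comp, ← adjoint_inner_left, inner_eq_sum_tsum]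
  simp [adjoint_delta_apply hA]

theorem diagTrace_mul_comm {A B : L2Vec G ι →L[ℂ] L2Vec G ι} (hA : A ∈ rightCommutant G ι)
    (hB : B ∈ rightCommutant G ι) : diagTrace (delta G) (A * B) = diagTrace (delta G) (B * A) := by
  rw [diagTrace_mul_eq hA, diagTrace_mul_eq hB, sum_comm]
  refine sum_congr rfl fun i _ => sum_congr rfl fun k _ => ?_
  rw [← (Equiv.inv G).tsum_eq]
  simp [mul_comm]

theorem diagTrace_starProjection_ker_eq_ker_adjoint {P : L2Vec G ι →L[ℂ] L2Vec G ι}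
    (hP : P ∈ rightCommutant G ι) :
    diagTrace (delta G) P.ker.starProjection =
      diagTrace (delta G) (adjoint P).ker.starProjection := by
  obtain ⟨r, hr, hrP⟩ : ∃ r : ℝ, 0 < r ∧ r * ‖P‖ ^ 2 ≤ 1 :=
    ⟨(‖P‖ ^ 2 + 1)⁻¹, by positivity, by rw [inv_mul_le_one₀ (by positivity)]; linarith⟩
  have hlim := tendsto_diagTrace_average_one_sub_smul_adjoint_mul_self (delta G) P hr hrP
  have hlim' := tendsto_diagTrace_average_one_sub_smul_adjoint_mul_self (delta G) (adjoint P) hr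
    (by rwa [LinearIsometryEquiv.norm_map])
  rw [adjoint_adjoint] at hlim'
  have hP' : adjoint P ∈ rightCommutant G ι := star_mem hP
  have htrace (k : ℕ) := trace_one_sub_smul_mul_pow_comm (diagTrace (delta G))
    (rightCommutant G ι).toSubalgebra (fun a ha b hb => diagTrace_mul_comm ha hb) hP hP' r k
  refine tendsto_nhds_unique hlim (hlim'.congr fun N => ?_)
  simp only [map_smul, map_sum]
  exact congrArg _ (sum_congr rfl fun k _ => (htrace k).symm)

theorem injective_of_adjoint_injective {P : L2Vec G ι →L[ℂ] L2Vec G ι}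
    (hP : P ∈ rightCommutant G ι) (hP' : Function.Injective (adjoint P)) :
    Function.Injective P := by
  have hzero : diagTrace (delta G) P.ker.starProjection = 0 := by
    rw [diagTrace_starProjection_ker_eq_ker_adjoint hP, diagTrace_apply]
    refine sum_eq_zero fun i _ => ?_
    rw [(Submodule.starProjection_apply_eq_zero_iff _).mpr, inner_zero_right]
    simp [LinearMap.ker_eq_bot.mpr hP']
  rw [injective_iff_map_eq_zero]
  intro x hx
  ext i g
  rw [← inner_delta_rightTranslateVec]
  refine Submodule.inner_left_of_mem_orthogonal ?_
    (mem_orthogonal_of_diagTrace_starProjection_eq_zero _ hzero i)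
  simp [mem_rightCommutant.mp hP, hx]

theorem adjoint_injective_of_delta_mem_range {P : L2Vec G ι →L[ℂ] L2Vec G ι}
    (hP : P ∈ rightCommutant G ι) (h : ∀ i, ∃ x, P x = delta G i) :
    Function.Injective (adjoint P) := by
  rw [injective_iff_map_eq_zero]
  intro w hw
  ext i g
  obtain ⟨x, hx⟩ := h i
  calc w i g = ⟪delta G i, rightTranslateVec g w⟫_ℂ := (inner_delta_rightTranslateVec i g w).symm
    _ = ⟪P (rightTranslateVec g⁻¹ x), w⟫_ℂ := by
      rw [mem_rightCommutant.mp hP, hx, ← rightTranslateVec_symm,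
        LinearIsometryEquiv.inner_map_eq_flip, LinearIsometryEquiv.symm_symm]
    _ = 0 := by rw [← adjoint_inner_right, hw, inner_zero_right]

theorem matConvCLM_column_eq_delta {n : ℕ} (f : Matrix (Fin n) (Fin n) (G →₀ ℂ))
    (ξ : Matrix (Fin n) (Fin n) (lp (fun _ : G => ℂ) 2))
    (hξ : matConv f (fun i j => ⇑(ξ i j)) = oneHat G n) (j : Fin n) :
    matConvCLM f (WithLp.toLp 2 fun k => ξ k j) = delta G j := by
  ext i g
  have hij := congrFun (congrFun (congrFun hξ i) j) g
  simp only [matConv, oneHat, Finset.sum_apply] at hij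
  rw [matConvCLM_apply, lp.coeFn_sum, Finset.sum_apply]
  simp only [coe_convolutionCLM_apply]
  rw [hij]
  by_cases hi : i = j <;> by_cases hg : g = 1 <;> simp [delta, hi, hg]

end GroupVonNeumannAlgebra

theorem formal_inverse_unique_general {G : Type*} [Group G] {n : ℕ}
    (f : Matrix (Fin n) (Fin n) (G →₀ ℂ))
    (ξ₁ ξ₂ : Matrix (Fin n) (Fin n) (lp (fun _ : G => ℂ) 2))
    (hξ₁ : matConv f (fun i j => ⇑(ξ₁ i j)) = oneHat G n)
    (hξ₂ : matConv f (fun i j => ⇑(ξ₂ i j)) = oneHat G n) :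
    ξ₁ = ξ₂ := by
  have hP := matConvCLM_mem_rightCommutant f
  have hcol₁ := matConvCLM_column_eq_delta f ξ₁ hξ₁
  have hcol₂ := matConvCLM_column_eq_delta f ξ₂ hξ₂
  have hinj : Function.Injective (matConvCLM f) :=
    injective_of_adjoint_injective hP
      (adjoint_injective_of_delta_mem_range hP fun j => ⟨_, hcol₁ j⟩)
  funext i j
  exact congr($(hinj ((hcol₁ j).trans (hcol₂ j).symm)) i)

/-- If `ξ₁, ξ₂ ∈ M_n(ℓ²(G))` both satisfy `fξ₁ = 1̂` and `fξ₂ = 1̂`, then `ξ₁ = ξ₂`: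
the ℓ² formal inverse of `f ∈ M_n(ℂ[G])`, when it exists, is unique. -/
theorem formal_inverse_unique {G : Type*} [Group G] [Countable G] {n : ℕ}
    (f : Matrix (Fin n) (Fin n) (G →₀ ℂ))
    (ξ₁ ξ₂ : Matrix (Fin n) (Fin n) (lp (fun _ : G => ℂ) 2))
    (hξ₁ : matConv f (fun i j => ⇑(ξ₁ i j)) = oneHat G n)
    (hξ₂ : matConv f (fun i j => ⇑(ξ₂ i j)) = oneHat G n) :
    ξ₁ = ξ₂ :=
  formal_inverse_unique_general f ξ₁ ξ₂ hξ₁ hξ₂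
end
end

section
/- Let G be a countable discrete group, f an n×n matrix over ℤ[G] admitting an ℓ² formal inverse ξ. Then for all α, β ∈ ℤ[G]^{⊕n}: Σ_{l=1}^n Σ_{g∈G} (r(f)α)(l)(g)·conj((r(ξ*)β)(l)(g)) = Σ_{l=1}^n Σ_{g∈G} α(l)(g)·β(l)(g); in particular this inner product is an integer. -/
open scoped Classical ENNReal ComplexConjugate

noncomputable section

/-- Convolution of `ξ : G → ℂ` with a finitely supported `a : ℂ[G]`:
`(ξ*a)(g) = ∑_{h} ξ(h) a(h⁻¹g)`. -/
def fconvR {G : Type*} [Group G] (ξ : G → ℂ) (a : G →₀ ℂ) : G → ℂ :=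
  fun g => a.sum fun h c => ξ (g * h⁻¹) * c

/-- `(ξf)_{ij} = ∑_k ξ_{ik} * f_{kj}`. -/
def matConvR {G : Type*} [Group G] {n : ℕ} (ξ : Matrix (Fin n) (Fin n) (G → ℂ))
    (f : Matrix (Fin n) (Fin n) (G →₀ ℂ)) : Matrix (Fin n) (Fin n) (G → ℂ) :=
  fun i j => ∑ k, fconvR (ξ i k) (f k j)

/-- A finitely supported integer-valued function regarded as an element of `ℂ[G]`. -/
def castZC {G : Type*} [Group G] (a : MonoidAlgebra ℤ G) : G →₀ ℂ :=
  Finsupp.mapRange (Int.cast : ℤ → ℂ) Int.cast_zero a.coeff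

/-!
Expanding `r(f)α = ∑ₖ αₖ fₖₗ` and the conjugate of `r(ξ*)β`, the pairing becomes
`∑ αₖ(a) βⱼ(h) ∑ₗ (fₖₗ * ξₗⱼ)(a⁻¹h)`, and `fξ = 1̂` collapses the inner sum to `δₖⱼ δ_{a,h}`.
Since `α`, `β` and `f` are finitely supported, every reordering is a commutation of finite
sums; no `ℓ²` estimate is involved.
-/
namespace IntPairing

variable {G R : Type*} [CommRing R]

/-- Both sides of `rf_pairing_integral` are, definitionally, sums of such pairings. -/
def pairing (x : MonoidAlgebra ℤ G) (ψ : G → R) : R :=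
  x.coeff.sum fun g c => (c : R) * ψ g

theorem pairing_sum_left {ι : Type*} (s : Finset ι) (x : ι → MonoidAlgebra ℤ G) (ψ : G → R) :
    pairing (∑ i ∈ s, x i) ψ = ∑ i ∈ s, pairing (x i) ψ := by
  rw [pairing, MonoidAlgebra.coeff_sum,
    ← Finsupp.sum_finsetSum_index (fun _ => by simp) (fun _ _ _ => by push_cast; ring)]
  rfl

theorem pairing_sum_right {ι : Type*} (s : Finset ι) (x : MonoidAlgebra ℤ G) (F : ι → G → R) :
    pairing x (fun g => ∑ i ∈ s, F i g) = ∑ i ∈ s, pairing x (F i) := by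
  simp only [pairing, Finsupp.sum, Finset.mul_sum]
  exact Finset.sum_comm

theorem pairing_comm (x y : MonoidAlgebra ℤ G) (F : G → G → R) :
    pairing x (fun g => pairing y (F g)) = pairing y (fun h => pairing x (fun g => F g h)) := by
  simp only [pairing, Finsupp.sum, Finset.mul_sum]
  rw [Finset.sum_comm]
  exact Finset.sum_congr rfl fun _ _ => Finset.sum_congr rfl fun _ _ => mul_left_comm _ _ _

theorem pairing_mul [Mul G] (a b : MonoidAlgebra ℤ G) (ψ : G → R) :
    pairing (a * b) ψ = pairing a (fun x => pairing b (fun y => ψ (x * y))) := by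
  have h0 : ∀ g, ((0 : ℤ) : R) * ψ g = 0 := fun _ => by simp
  have hadd : ∀ g (c₁ c₂ : ℤ), ((c₁ + c₂ : ℤ) : R) * ψ g = c₁ * ψ g + c₂ * ψ g :=
    fun _ _ _ => by push_cast; ring
  rw [pairing, MonoidAlgebra.mul_def, MonoidAlgebra.coeff_finsuppSum,
    Finsupp.sum_sum_index h0 hadd]
  refine Finsupp.sum_congr fun x _ => ?_
  rw [MonoidAlgebra.coeff_finsuppSum, Finsupp.sum_sum_index h0 hadd]
  dsimp only
  rw [pairing, Finsupp.mul_sum]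
  refine Finsupp.sum_congr fun y _ => ?_
  rw [MonoidAlgebra.coeff_single, Finsupp.sum_single_index (h0 _)]
  push_cast
  ring

theorem pairing_ite_eq [DecidableEq G] (x : MonoidAlgebra ℤ G) (a : G) :
    pairing x (fun h => if a = h then (1 : R) else 0) = x.coeff a := by
  simp only [pairing, mul_ite, mul_one, mul_zero]
  rw [Finsupp.sum_ite_eq]
  split_ifs with ha
  · rfl
  · simp [Finsupp.notMem_support_iff.mp ha]

theorem sum_pairing_sum_pairing_comm {ι κ : Type*} (s : Finset ι) (t : Finset κ)
    (x : ι → MonoidAlgebra ℤ G) (y : κ → MonoidAlgebra ℤ G) (F : ι → κ → G → G → R) :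
    ∑ i ∈ s, pairing (x i) (fun g => ∑ j ∈ t, pairing (y j) (F i j g)) =
      ∑ j ∈ t, pairing (y j) (fun h => ∑ i ∈ s, pairing (x i) (fun g => F i j g h)) := by
  simp only [pairing_sum_right]
  rw [Finset.sum_comm]
  exact Finset.sum_congr rfl fun _ _ => Finset.sum_congr rfl fun _ _ => pairing_comm _ _ _

end IntPairing

open IntPairing

theorem fconv_castZC {G : Type*} [Group G] (a : MonoidAlgebra ℤ G) (η : G → ℂ) (g : G) :
    fconv (castZC a) η g = pairing a (fun h => η (h⁻¹ * g)) :=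
  Finsupp.sum_mapRange_index fun _ => zero_mul _

theorem conj_fconv_castZC_adjoint {G : Type*} [Group G] (a : MonoidAlgebra ℤ G) (η : G → ℂ)
    (g : G) :
    conj (fconv (castZC a) (fun x => conj (η x⁻¹)) g) = pairing a (fun h => η (g⁻¹ * h)) := by
  rw [fconv_castZC, pairing, Finsupp.sum, map_sum]
  refine Finset.sum_congr rfl fun h _ => ?_
  simp [mul_inv_rev]

theorem sum_pairing_eq_ite_of_matConv_eq_oneHat {G : Type*} [Group G] {n : ℕ}
    {f : Matrix (Fin n) (Fin n) (MonoidAlgebra ℤ G)} {ξ : Matrix (Fin n) (Fin n) (G → ℂ)}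
    (h : matConv (fun i j => castZC (f i j)) ξ = oneHat G n) (k j : Fin n) (g : G) :
    ∑ l, pairing (f k l) (fun b => ξ l j (b⁻¹ * g)) = if k = j ∧ g = 1 then 1 else 0 := by
  simpa only [matConv, oneHat, Finset.sum_apply, fconv_castZC] using
    congrFun (congrFun (congrFun h k) j) g

/-- Here `(r(f)α)(l) = ∑_k α(k) * f_{kl}` (multiplication in `ℤ[G]`, i.e. convolution) and
`(r(ξ*)β)(l) = ∑_k β(k) * (ξ*)_{kl}` with `(ξ*)_{kl}(g) = conj(ξ_{lk}(g⁻¹))`. -/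
theorem rf_pairing_integral_general {G : Type*} [Group G] {n : ℕ}
    (f : Matrix (Fin n) (Fin n) (MonoidAlgebra ℤ G))
    (ξ : Matrix (Fin n) (Fin n) (lp (fun _ : G => ℂ) 2))
    (hξ : matConv (fun i j => castZC (f i j)) (fun i j => ⇑(ξ i j)) = oneHat G n ∧
          matConvR (fun i j => ⇑(ξ i j)) (fun i j => castZC (f i j)) = oneHat G n)
    (α β : Fin n → MonoidAlgebra ℤ G) :
    ∑ l, Finsupp.sum (∑ k, α k * f k l).coeff (fun g c =>
        (c : ℂ) * conj ((∑ k, fconv (castZC (β k)) (fun x : G => conj (ξ l k x⁻¹))) g)) =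
      ∑ l, Finsupp.sum (α l).coeff (fun g c => (c : ℂ) * (((β l).coeff g : ℤ) : ℂ)) := by
  have hdelta := sum_pairing_eq_ite_of_matConv_eq_oneHat hξ.1
  have hadjoint : ∀ l g, conj ((∑ k, fconv (castZC (β k)) (fun x : G => conj (ξ l k x⁻¹))) g) =
      ∑ j, pairing (β j) (fun h => ξ l j (g⁻¹ * h)) := fun l g => by
    simp only [Finset.sum_apply, map_sum, conj_fconv_castZC_adjoint]
  calc ∑ l, pairing (∑ k, α k * f k l)
          (fun g => conj ((∑ k, fconv (castZC (β k)) (fun x : G => conj (ξ l k x⁻¹))) g))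
      = ∑ k, ∑ l, pairing (α k) (fun a => pairing (f k l) (fun b =>
          ∑ j, pairing (β j) (fun h => ξ l j (b⁻¹ * (a⁻¹ * h))))) := by
        simp only [hadjoint, pairing_sum_left, pairing_mul, mul_inv_rev, mul_assoc]
        exact Finset.sum_comm
    _ = ∑ k, pairing (α k) (fun a => ∑ j, pairing (β j) (fun h =>
          ∑ l, pairing (f k l) (fun b => ξ l j (b⁻¹ * (a⁻¹ * h))))) := by
        refine Finset.sum_congr rfl fun k _ => (pairing_sum_right _ _ _).symm.trans ?_
        exact congrArg _ (funext fun a => sum_pairing_sum_pairing_comm _ _ _ _ _)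
    _ = ∑ k, pairing (α k) (fun a => ∑ j, pairing (β j) (fun h =>
          if k = j ∧ a⁻¹ * h = 1 then 1 else 0)) := by
        simp only [hdelta]
    _ = ∑ k, pairing (α k) (fun a => ((β k).coeff a : ℂ)) := by
        refine Finset.sum_congr rfl fun k _ => congrArg _ (funext fun a => ?_)
        simp only [inv_mul_eq_one, ite_and]
        rw [Finset.sum_eq_single_of_mem k (Finset.mem_univ k)
          fun j _ hjk => by simp [pairing, Ne.symm hjk]]
        simp only [↓reduceIte, pairing_ite_eq]

/-- For `f ∈ M_n(ℤ[G])` with ℓ² formal inverse `ξ` and `α, β ∈ ℤ[G]^{⊕n}`: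
`⟨r(f)α, r(ξ*)β⟩ = ∑_l ∑_g α(l)(g)·β(l)(g)`; in particular this inner product is an
integer.  Here `(r(f)α)(l) = ∑_k α(k) * f_{kl}` (multiplication in `ℤ[G]`, i.e.
convolution), `(r(ξ*)β)(l) = ∑_k β(k) * (ξ*)_{kl}` with `(ξ*)_{kl}(g) = conj(ξ_{lk}(g⁻¹))`. -/
theorem rf_pairing_integral {G : Type*} [Group G] [Countable G] {n : ℕ}
    (f : Matrix (Fin n) (Fin n) (MonoidAlgebra ℤ G))
    (ξ : Matrix (Fin n) (Fin n) (lp (fun _ : G => ℂ) 2))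
    (hξ : matConv (fun i j => castZC (f i j)) (fun i j => ⇑(ξ i j)) = oneHat G n ∧
          matConvR (fun i j => ⇑(ξ i j)) (fun i j => castZC (f i j)) = oneHat G n)
    (α β : Fin n → MonoidAlgebra ℤ G) :
    ∑ l, Finsupp.sum (∑ k, α k * f k l).coeff (fun g c =>
        (c : ℂ) * conj ((∑ k, fconv (castZC (β k)) (fun x : G => conj (ξ l k x⁻¹))) g)) =
      ∑ l, Finsupp.sum (α l).coeff (fun g c => (c : ℂ) * (((β l).coeff g : ℤ) : ℂ)) :=
  rf_pairing_integral_general f ξ hξ α β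
end
end

section
/- Let G be a countable discrete group and f an n×n matrix over ℤ[G] admitting an ℓ² formal inverse. Then the homoclinic group Δ(X_f) = { θ ∈ X_f : g·θ → 0 along the cofinite filter on G } is dense in X_f, where convergence is in the product topology of (𝕋^G)^{⊕n}. -/
open scoped Classical ENNReal

noncomputable section

/-- `X_f`: the closed subgroup of `(𝕋^G)^{⊕n}` of all `θ` annihilating
`r(f)(ℤ[G]^{⊕n})` under the natural pairing, where `(r(f)β)(l) = ∑_k β(k) * f_{kl}`. -/
def Xf {G : Type*} [Group G] {n : ℕ} (f : Matrix (Fin n) (Fin n) (MonoidAlgebra ℤ G)) :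
    Set (Fin n → G → AddCircle (1 : ℝ)) :=
  {θ | ∀ β : Fin n → MonoidAlgebra ℤ G,
    ∑ l, Finsupp.sum (∑ k, β k * f k l).coeff (fun g c => c • θ l g) = 0}

/-!
The real part `η` of the ℓ² inverse is still a two-sided formal inverse of `f` (the entries of `f`
are integers) and vanishes at infinity. For `α ∈ ℤ[G]ⁿ` the convolution of `α` with `η`, reduced
mod 1, is homoclinic because `η → 0`, and lies in `X_f` because applying `f` to it returns the
integral vector `α`.

Density of these points is tested against characters. The product topology reduces this to
finitely many coordinates, where a closed subgroup `K` of a finite torus is separated from a point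
`x ∉ K` by a character: otherwise averaging over the cosets `x + K` and `K` would agree on every
character, hence on every continuous function, which a Urysohn function contradicts. So let
`β ∈ ℤ[G]ⁿ` pair integrally with every homoclinic point above. Then the convolution `γ` of `β` with
`η` is integer-valued and tends to zero, hence finitely supported, and the other inverse identity
gives `r(f) γ = β`; thus `β` annihilates `X_f`.
-/

open MeasureTheory Filter Topology

lemma eq_one_of_integral_ne_zero {A : Type*} [AddGroup A] [MeasurableSpace A] [MeasurableAdd A]
    (μ : Measure A) [μ.IsAddLeftInvariant] {χ : A → ℂ}
    (hχ : ∀ a b, χ (a + b) = χ a * χ b) (h : ∫ b, χ b ∂μ ≠ 0) (a : A) : χ a = 1 := by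
  have : χ a * ∫ b, χ b ∂μ = ∫ b, χ b ∂μ :=
    calc χ a * ∫ b, χ b ∂μ = ∫ b, χ (a + b) ∂μ := by simp only [hχ, integral_const_mul]
      _ = ∫ b, χ b ∂μ := integral_add_left_eq_self _ a
  simpa [h] using this

def ContinuousMap.integralCLM {X : Type*} [TopologicalSpace X] [CompactSpace X]
    [MeasurableSpace X] [BorelSpace X] (μ : Measure X) [IsFiniteMeasure μ] : C(X, ℂ) →L[ℂ] ℂ where
  toFun P := ∫ x, P x ∂μ
  map_add' P Q := integral_add (P.continuous.integrable_of_hasCompactSupport (.of_compactSpace _))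
    (Q.continuous.integrable_of_hasCompactSupport (.of_compactSpace _))
  map_smul' c P := integral_smul c P
  cont := by
    have : (fun P : C(X, ℂ) => ∫ x, P x ∂μ) = fun P => ∫ x, ContinuousMap.toLp 1 μ ℂ P x ∂μ :=
      funext fun P => integral_congr_ae (ContinuousMap.coeFn_toLp μ P).symm
    rw [this]
    exact MeasureTheory.continuous_integral.comp (ContinuousMap.toLp 1 μ ℂ).continuous

namespace UnitAddTorus

variable {d : Type*} [Fintype d]

lemma mFourier_apply_eq_toCircle (m : d → ℤ) (x : UnitAddTorus d) :
    mFourier m x = AddCircle.toCircle (∑ i, m i • x i) := by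
  simp only [mFourier, fourier_apply, ContinuousMap.coe_mk]
  induction (Finset.univ : Finset d) using Finset.cons_induction with
  | empty => simp
  | cons i s hi ih =>
    rw [Finset.prod_cons, Finset.sum_cons, ih, AddCircle.toCircle_add, Circle.coe_mul]

lemma mFourier_apply_add (m : d → ℤ) (x y : UnitAddTorus d) :
    mFourier m (x + y) = mFourier m x * mFourier m y := by
  simp only [mFourier_apply_eq_toCircle, Pi.add_apply, smul_add, Finset.sum_add_distrib,
    AddCircle.toCircle_add, Circle.coe_mul]

lemma mFourier_apply_eq_one_iff (m : d → ℤ) (x : UnitAddTorus d) :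
    mFourier m x = 1 ↔ ∑ i, m i • x i = 0 := by
  rw [mFourier_apply_eq_toCircle, ← Circle.coe_one, Circle.coe_inj, ← AddCircle.toCircle_zero,
    (AddCircle.injective_toCircle one_ne_zero).eq_iff]

theorem exists_annihilating_of_notMem {K : AddSubgroup (UnitAddTorus d)}
    (hK : IsClosed (K : Set (UnitAddTorus d))) {x : UnitAddTorus d} (hx : x ∉ K) :
    ∃ m : d → ℤ, (∀ k ∈ K, ∑ i, m i • k i = 0) ∧ ∑ i, m i • x i ≠ 0 := by
  by_contra! hcon
  have : CompactSpace K := isCompact_iff_compactSpace.mp hK.isCompact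
  let μ : Measure K := Measure.addHaarMeasure ⊤
  have : IsProbabilityMeasure μ := ⟨Measure.addHaarMeasure_self⟩
  let avg (y : UnitAddTorus d) : C(UnitAddTorus d, ℂ) →ₗ[ℂ] ℂ :=
    (ContinuousMap.integralCLM μ).toLinearMap.comp
      (ContinuousMap.compStarAlgHom' ℂ ℂ ⟨fun k : K => y + k, by fun_prop⟩).toLinearMap
  have avg_apply (y P) : avg y P = ∫ k : K, P (y + k) ∂μ := rfl
  -- A character either is trivial on `K`, hence at `x`, or has mean zero on every coset of `K`.
  have avg_mFourier (m : d → ℤ) : avg x (mFourier m) = avg 0 (mFourier m) := by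
    by_cases h : ∫ k : K, mFourier m k ∂μ = 0
    · simp [avg_apply, mFourier_apply_add, integral_const_mul, h]
    · have hm : ∀ k ∈ K, ∑ i, m i • k i = 0 := fun k hk => (mFourier_apply_eq_one_iff m k).mp
        (eq_one_of_integral_ne_zero μ (fun a b => mFourier_apply_add m a b) h ⟨k, hk⟩)
      simp [avg_apply, mFourier_apply_add, (mFourier_apply_eq_one_iff m x).mpr (hcon m hm)]
  have avg_eq : ∀ P, avg x P = avg 0 P := by
    have avg_continuous (y) : Continuous (avg y) :=
      (ContinuousMap.integralCLM μ).continuous.comp (ContinuousMap.continuous_precomp _)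
    have hclosed : IsClosed (LinearMap.eqLocus (avg x) (avg 0) : Set C(UnitAddTorus d, ℂ)) :=
      isClosed_eq (avg_continuous x) (avg_continuous 0)
    have := Submodule.topologicalClosure_minimal _
      (Submodule.span_le.mpr (Set.range_subset_iff.mpr avg_mFourier)) hclosed
    rw [span_mFourier_closure_eq_top] at this
    exact fun P => this Submodule.mem_top
  obtain ⟨F, hFx, hF0, -⟩ := exists_continuous_zero_one_of_isCompact
    (hK.isCompact.image (continuous_const_add x)) hK
    (Set.disjoint_left.mpr fun _ ⟨k, hk, hxk⟩ hK' => hx (by simpa [← hxk] using K.sub_mem hK' hk))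
  have := avg_eq ⟨fun y => (F y : ℂ), by fun_prop⟩
  simp [avg_apply, hFx ⟨_, Subtype.prop _, rfl⟩, hF0 (Subtype.prop _)] at this

end UnitAddTorus

section Pairing

variable {X Y M N : Type*} [AddCommGroup M] [AddCommGroup N]

def pair (a : X →₀ ℤ) (φ : X → M) : M := a.sum fun x c => c • φ x

lemma pair_add_left (a b : X →₀ ℤ) (φ : X → M) : pair (a + b) φ = pair a φ + pair b φ :=
  Finsupp.sum_add_index' (fun _ => zero_smul ℤ _) fun _ _ _ => add_smul _ _ _

lemma pair_sum_left {κ : Type*} (s : Finset κ) (a : κ → X →₀ ℤ) (φ : X → M) :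
    pair (∑ k ∈ s, a k) φ = ∑ k ∈ s, pair (a k) φ :=
  (Finsupp.sum_finsetSum_index (h := fun x c => c • φ x) (fun _ => zero_smul ℤ _)
    fun _ _ _ => add_smul _ _ _).symm

lemma pair_sum_right {κ : Type*} (s : Finset κ) (a : X →₀ ℤ) (φ : κ → X → M) :
    pair a (fun x => ∑ k ∈ s, φ k x) = ∑ k ∈ s, pair a (φ k) := by
  simp only [pair, Finset.smul_sum]
  exact Finset.sum_comm

lemma pair_comm (a : X →₀ ℤ) (b : Y →₀ ℤ) (F : X → Y → M) :
    pair a (fun x => pair b (F x)) = pair b (fun y => pair a (fun x => F x y)) := by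
  simp only [pair, Finsupp.smul_sum]
  rw [Finsupp.sum_comm]
  exact Finsupp.sum_congr fun y _ => Finsupp.sum_congr fun x _ => smul_comm _ _ _

lemma map_pair (q : M →+ N) (a : X →₀ ℤ) (φ : X → M) : q (pair a φ) = pair a (q ∘ φ) := by
  simp only [pair, map_finsuppSum, map_zsmul, Function.comp_apply]

lemma pair_single (x : X) (c : ℤ) (φ : X → M) : pair (Finsupp.single x c) φ = c • φ x :=
  Finsupp.sum_single_index (zero_smul ℤ _)

lemma pair_ite_eq (a : X →₀ ℤ) (x : X) (m : M) :
    pair a (fun y => if y = x then m else 0) = a x • m := by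
  simp +contextual [pair, smul_ite]

lemma tendsto_pair [TopologicalSpace M] [IsTopologicalAddGroup M] {l : Filter Y} (a : X →₀ ℤ)
    {F : X → Y → M} (hF : ∀ x, Tendsto (F x) l (𝓝 0)) :
    Tendsto (fun y => pair a (fun x => F x y)) l (𝓝 0) := by
  simpa [pair, Finsupp.sum, Function.comp_def] using tendsto_finsetSum a.support fun x _ =>
    ((continuous_zsmul (a x)).tendsto 0).comp (hF x)

variable {ι κ : Type*} [Fintype ι] [Fintype κ]

def vecPair (α : ι → X →₀ ℤ) (Φ : ι → X → M) : M := ∑ i, pair (α i) (Φ i)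

lemma vecPair_add_left (α β : ι → X →₀ ℤ) (Φ : ι → X → M) :
    vecPair (α + β) Φ = vecPair α Φ + vecPair β Φ := by
  simp only [vecPair, Pi.add_apply, pair_add_left, Finset.sum_add_distrib]

lemma vecPair_comm (α : ι → X →₀ ℤ) (β : κ → Y →₀ ℤ) (F : ι → X → κ → Y → M) :
    vecPair α (fun i x => vecPair β (F i x)) =
      vecPair β (fun k y => vecPair α (fun i x => F i x k y)) := by
  simp only [vecPair, pair_sum_right, pair_comm (α _)]
  exact Finset.sum_comm

lemma map_vecPair (q : M →+ N) (α : ι → X →₀ ℤ) (Φ : ι → X → M) :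
    q (vecPair α Φ) = vecPair α (fun i => q ∘ Φ i) := by
  simp only [vecPair, map_sum, map_pair]

lemma coe_vecPair_intCast (β : ι → X →₀ ℤ) (α : ι → X → ℤ) :
    ((vecPair β fun k h => (α k h : ℝ) : ℝ) : UnitAddCircle) = 0 := by
  have : (vecPair β fun k h => (α k h : ℝ)) = ((vecPair β α : ℤ) : ℝ) :=
    (map_vecPair (Int.castAddHom ℝ) β α).symm
  rw [this, AddCircle.coe_eq_zero_iff]
  exact ⟨vecPair β α, by simp⟩

lemma vecPair_single [DecidableEq ι] (i : ι) (x : X) (c : ℤ) (Φ : ι → X → M) :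
    vecPair (Pi.single i (Finsupp.single x c)) Φ = c • Φ i x := by
  rw [vecPair, Fintype.sum_eq_single i fun j hj => by simp [Pi.single_eq_of_ne hj, pair]]
  simp [pair_single]

lemma vecPair_ite_eq [DecidableEq ι] (α : ι → X →₀ ℤ) (i : ι) (x : X) (m : M) :
    vecPair α (fun j y => if j = i ∧ y = x then m else 0) = α i x • m := by
  rw [vecPair, Fintype.sum_eq_single i fun j hj => by simp [hj, pair]]
  simp [pair_ite_eq]

lemma tendsto_vecPair [TopologicalSpace M] [IsTopologicalAddGroup M] {l : Filter Y}
    (α : ι → X →₀ ℤ) {F : ι → X → Y → M} (hF : ∀ i x, Tendsto (F i x) l (𝓝 0)) :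
    Tendsto (fun y => vecPair α (fun i x => F i x y)) l (𝓝 0) := by
  simpa [vecPair] using tendsto_finsetSum Finset.univ fun i _ => tendsto_pair (α i) (hF i)

end Pairing

lemma mem_closure_of_forall_finset_restrict {ι : Type*} {X : ι → Type*}
    [∀ i, TopologicalSpace (X i)] {S : Set (∀ i, X i)} {θ : ∀ i, X i}
    (h : ∀ I : Finset ι, I.restrict θ ∈ closure (I.restrict '' S)) : θ ∈ closure S := by
  refine mem_closure_iff.mpr fun U hU hθU => ?_
  obtain ⟨I, u, hu, hIU⟩ := isOpen_pi_iff.mp hU θ hθU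
  obtain ⟨_, hV, ψ, hψS, rfl⟩ := mem_closure_iff.mp (h I) (Set.pi Set.univ fun i : I => u i)
    (isOpen_set_pi Set.finite_univ fun i _ => (hu i i.2).1) fun i _ => (hu i i.2).2
  exact ⟨ψ, hIU fun i hi => hV ⟨i, hi⟩ trivial, hψS⟩

lemma mem_closure_of_forall_pair {ι : Type*} {H : AddSubgroup (ι → UnitAddCircle)}
    {θ : ι → UnitAddCircle} (h : ∀ χ : ι →₀ ℤ, (∀ ψ ∈ H, pair χ ψ = 0) → pair χ θ = 0) :
    θ ∈ closure (H : Set (ι → UnitAddCircle)) := by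
  refine mem_closure_of_forall_finset_restrict fun I => ?_
  let ρ : (ι → UnitAddCircle) →+ (I → UnitAddCircle) :=
    AddMonoidHom.pi fun i : I => Pi.evalAddMonoidHom (fun _ : ι => UnitAddCircle) i
  by_contra hθ
  obtain ⟨m, hmK, hmθ⟩ := UnitAddTorus.exists_annihilating_of_notMem
    (K := (H.map ρ).topologicalClosure) (AddSubgroup.isClosed_topologicalClosure _) hθ
  let χ : ι →₀ ℤ := (Finsupp.equivFunOnFinite.symm m).mapDomain Subtype.val
  have hχ (ψ : ι → UnitAddCircle) : pair χ ψ = ∑ i, m i • ψ i := by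
    simp [χ, pair, Finsupp.sum_mapDomain_index_inj Subtype.val_injective, Finsupp.sum_fintype]
  have := h χ fun ψ hψ => by
    rw [hχ]
    exact hmK (ρ ψ) (AddSubgroup.le_topologicalClosure _ ⟨ψ, hψ, rfl⟩)
  exact hmθ (by rwa [hχ] at this)

lemma mem_closure_of_forall_vecPair {κ ι : Type*} [Fintype κ]
    {H : AddSubgroup (κ → ι → UnitAddCircle)} {θ : κ → ι → UnitAddCircle}
    (h : ∀ β : κ → ι →₀ ℤ, (∀ ψ ∈ H, vecPair β ψ = 0) → vecPair β θ = 0) :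
    θ ∈ closure (H : Set (κ → ι → UnitAddCircle)) := by
  let e := Homeomorph.piCurry (X := κ) (Y := ι) (Z := UnitAddCircle)
  have pair_eq (χ : κ × ι →₀ ℤ) (ψ : κ × ι → UnitAddCircle) :
      pair χ ψ = vecPair (fun k => χ.curry k) (e ψ) := by
    rw [vecPair, ← Finsupp.sum_fintype χ.curry (fun k a => pair a (e ψ k))
      fun _ => Finsupp.sum_zero_index]
    exact (Finsupp.sum_curry_index χ fun k i c => c • ψ (k, i)).symm
  let H' : AddSubgroup (κ × ι → UnitAddCircle) :=
    H.comap { toFun := e, map_zero' := rfl, map_add' := fun _ _ => rfl }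
  have : e.symm θ ∈ closure (H' : Set (κ × ι → UnitAddCircle)) :=
    mem_closure_of_forall_pair fun χ hχ => by
      rw [pair_eq]
      exact h _ fun ψ hψ => by
        simpa [pair_eq] using hχ (e.symm ψ) (show e (e.symm ψ) ∈ H by simpa using hψ)
  change e.symm θ ∈ closure (e ⁻¹' H) at this
  rw [← e.preimage_closure] at this
  simpa using this

lemma pair_coeff_mul {G M : Type*} [Mul G] [AddCommGroup M] (a b : MonoidAlgebra ℤ G)
    (φ : G → M) :
    pair (a * b).coeff φ = pair a.coeff fun h => pair b.coeff fun s => φ (h * s) := by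
  rw [MonoidAlgebra.mul_def, MonoidAlgebra.coeff_finsuppSum, pair,
    Finsupp.sum_sum_index (h := fun x c => c • φ x) (fun _ => zero_smul ℤ _)
      fun _ _ _ => add_smul _ _ _]
  refine Finsupp.sum_congr fun h _ => ?_
  rw [MonoidAlgebra.coeff_finsuppSum, Finsupp.sum_sum_index (h := fun x c => c • φ x)
    (fun _ => zero_smul ℤ _) fun _ _ _ => add_smul _ _ _]
  simp only [pair, Finsupp.smul_sum]
  refine Finsupp.sum_congr fun s _ => ?_
  rw [MonoidAlgebra.coeff_single, Finsupp.sum_single_index (h := fun x c => c • φ x)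
    (zero_smul ℤ _), mul_smul]

section FormalInverse

open scoped Matrix

variable {G M : Type*} [Group G] [AddCommGroup M] {ι : Type*} [Fintype ι]

lemma coeff_mul_apply_eq_pair (a b : MonoidAlgebra ℤ G) (g : G) :
    (a * b).coeff g = pair b.coeff fun s => a.coeff (g * s⁻¹) := by
  rw [MonoidAlgebra.coeff_mul_apply_right]
  exact Finsupp.sum_congr fun _ _ => mul_comm _ _

lemma vecPair_coeff_vecMul (f : Matrix ι ι (MonoidAlgebra ℤ G)) (β : ι → MonoidAlgebra ℤ G)
    (Φ : ι → G → M) :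
    vecPair (fun l => ((β ᵥ* f) l).coeff) Φ = vecPair (fun k => (β k).coeff)
      fun k h => vecPair (fun l => (f k l).coeff) fun l s => Φ l (h * s) := by
  simp only [vecPair, Matrix.vecMul, dotProduct, MonoidAlgebra.coeff_sum, pair_sum_left,
    pair_coeff_mul, pair_sum_right]
  exact Finset.sum_comm

/-- `f η = 1̂ = η f`, with both convolutions written as pairings. -/
structure IsFormalInverse [DecidableEq ι] (f : Matrix ι ι (MonoidAlgebra ℤ G))
    (η : ι → ι → G → ℝ) : Prop where
  left (i j : ι) (g : G) : vecPair (fun k => (f i k).coeff) (fun k h => η k j (h⁻¹ * g)) =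
    if i = j ∧ g = 1 then 1 else 0
  right (i j : ι) (g : G) : vecPair (fun k => (f k j).coeff) (fun k h => η i k (g * h⁻¹)) =
    if i = j ∧ g = 1 then 1 else 0

def homoclinicLift (η : ι → ι → G → ℝ) (α : ι → G →₀ ℤ) : ι → G → ℝ :=
  fun l g => vecPair α fun m u => η l m (g⁻¹ * u)

def dualLift (η : ι → ι → G → ℝ) (β : ι → G →₀ ℤ) : ι → G → ℝ :=
  fun m u => vecPair β fun l h => η l m (h⁻¹ * u)

lemma vecPair_homoclinicLift (η : ι → ι → G → ℝ) (β α : ι → G →₀ ℤ) :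
    vecPair β (homoclinicLift η α) = vecPair α (dualLift η β) :=
  vecPair_comm _ _ _

variable [DecidableEq ι] {f : Matrix ι ι (MonoidAlgebra ℤ G)} {η : ι → ι → G → ℝ}

lemma IsFormalInverse.vecPair_homoclinicLift_mul (hη : IsFormalInverse f η)
    (α : ι → G →₀ ℤ) (k : ι) (h : G) :
    vecPair (fun l => (f k l).coeff) (fun l s => homoclinicLift η α l (h * s)) = α k h := by
  simp only [homoclinicLift]
  rw [vecPair_comm]
  simp only [_root_.mul_inv_rev, mul_assoc, hη.left, inv_mul_eq_one, eq_comm (a := k),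
    eq_comm (a := h)]
  rw [vecPair_ite_eq]
  simp

lemma IsFormalInverse.coeff_vecMul (hη : IsFormalInverse f η) (β : ι → G →₀ ℤ)
    {γ : ι → MonoidAlgebra ℤ G} (hγ : ∀ m u, ((γ m).coeff u : ℝ) = dualLift η β m u) (l : ι) :
    ((γ ᵥ* f) l).coeff = β l := by
  ext g
  apply Int.cast_injective (α := ℝ)
  calc (((γ ᵥ* f) l).coeff g : ℝ)
      = vecPair (fun m => (f m l).coeff) fun m s => dualLift η β m (g * s⁻¹) := by
        simp only [Matrix.vecMul, dotProduct, MonoidAlgebra.coeff_sum, Finset.sum_apply',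
          Int.cast_sum, coeff_mul_apply_eq_pair, vecPair, ← hγ]
        exact Finset.sum_congr rfl fun m _ => map_pair (Int.castAddHom ℝ) _ _
    _ = vecPair β fun l' h =>
          vecPair (fun m => (f m l).coeff) fun m s => η l' m (h⁻¹ * g * s⁻¹) := by
        simp only [dualLift, mul_assoc]
        exact vecPair_comm _ _ _
    _ = β l g := by
        simp only [hη.right, inv_mul_eq_one]
        rw [vecPair_ite_eq]
        simp

end FormalInverse

section Homoclinic

open scoped Matrix

variable {G : Type*} [Group G] {ι : Type*} [Fintype ι] {η : ι → ι → G → ℝ}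

def homoclinicHom (η : ι → ι → G → ℝ) : (ι → G →₀ ℤ) →+ (ι → G → UnitAddCircle) :=
  AddMonoidHom.mk' (fun α l g => homoclinicLift η α l g) fun α α' => by
    ext l g
    simp [homoclinicLift, vecPair_add_left]

lemma vecPair_homoclinicHom (β α : ι → G →₀ ℤ) :
    vecPair β (homoclinicHom η α) = ((vecPair β (homoclinicLift η α) : ℝ) : UnitAddCircle) :=
  (map_vecPair (QuotientAddGroup.mk' _) β _).symm

lemma mem_Xf_iff {n : ℕ} (f : Matrix (Fin n) (Fin n) (MonoidAlgebra ℤ G))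
    (θ : Fin n → G → UnitAddCircle) :
    θ ∈ Xf f ↔ ∀ β, vecPair (fun l => ((β ᵥ* f) l).coeff) θ = 0 :=
  Iff.rfl

lemma IsFormalInverse.homoclinicHom_mem_Xf {n : ℕ}
    {f : Matrix (Fin n) (Fin n) (MonoidAlgebra ℤ G)} {η : Fin n → Fin n → G → ℝ}
    (hη : IsFormalInverse f η) (α : Fin n → G →₀ ℤ) :
    homoclinicHom η α ∈ Xf f := by
  refine (mem_Xf_iff f _).mpr fun β => ?_
  rw [vecPair_homoclinicHom, vecPair_coeff_vecMul]
  simp only [hη.vecPair_homoclinicLift_mul]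
  exact coe_vecPair_intCast _ _

lemma tendsto_homoclinicHom (hη : ∀ l m, Tendsto (η l m) cofinite (𝓝 0)) (α : ι → G →₀ ℤ) :
    Tendsto (fun g : G => fun l h => homoclinicHom η α l (g⁻¹ * h)) cofinite (𝓝 0) := by
  refine tendsto_pi_nhds.mpr fun l => tendsto_pi_nhds.mpr fun h => ?_
  have : Tendsto (fun g => homoclinicLift η α l (g⁻¹ * h)) cofinite (𝓝 0) := by
    simp only [homoclinicLift, mul_inv_rev, inv_inv]
    exact tendsto_vecPair α fun m u => (hη l m).comp
      ((mul_left_injective u).comp (mul_right_injective h⁻¹)).tendsto_cofinite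
  exact (continuous_quotient_mk'.tendsto 0).comp this

lemma exists_finsupp_eq_of_tendsto_cofinite_zero {X : Type*} {φ : X → ℝ}
    (hφ : ∀ x, ∃ z : ℤ, φ x = z) (h0 : Tendsto φ cofinite (𝓝 0)) :
    ∃ c : X →₀ ℤ, ∀ x, (c x : ℝ) = φ x := by
  choose z hz using hφ
  have hfin : (Function.support z).Finite := by
    refine (eventually_cofinite.mp (h0.eventually (Ioo_mem_nhds (by norm_num : (-1 : ℝ) < 0)
      one_pos))).subset fun x hx hlt => hx ?_
    rw [hz] at hlt
    have : -1 < z x ∧ z x < 1 := by exact_mod_cast hlt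
    omega
  exact ⟨Finsupp.ofSupportFinite z hfin, fun x => (hz x).symm⟩

lemma tendsto_dualLift (hη : ∀ l m, Tendsto (η l m) cofinite (𝓝 0)) (β : ι → G →₀ ℤ) (m : ι) :
    Tendsto (dualLift η β m) cofinite (𝓝 0) :=
  tendsto_vecPair β fun l h => (hη l m).comp (mul_right_injective h⁻¹).tendsto_cofinite

lemma IsFormalInverse.vecPair_eq_zero_of_mem_Xf {n : ℕ}
    {f : Matrix (Fin n) (Fin n) (MonoidAlgebra ℤ G)} {η : Fin n → Fin n → G → ℝ}
    (hη : IsFormalInverse f η) (hη₀ : ∀ l m, Tendsto (η l m) cofinite (𝓝 0))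
    {θ : Fin n → G → UnitAddCircle} (hθ : θ ∈ Xf f) {β : Fin n → G →₀ ℤ}
    (hβ : ∀ ψ ∈ (homoclinicHom η).range, vecPair β ψ = 0) : vecPair β θ = 0 := by
  have hint (m : Fin n) (u : G) : ∃ z : ℤ, dualLift η β m u = z := by
    have := hβ _ ⟨Pi.single m (Finsupp.single u 1), rfl⟩
    rw [vecPair_homoclinicHom, vecPair_homoclinicLift, vecPair_single, one_smul] at this
    obtain ⟨z, hz⟩ := (AddCircle.coe_eq_zero_iff _).mp this
    exact ⟨z, by simpa using hz.symm⟩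
  choose c hc using fun m => exists_finsupp_eq_of_tendsto_cofinite_zero (hint m)
    (tendsto_dualLift hη₀ β m)
  have := (mem_Xf_iff f θ).mp hθ fun m => MonoidAlgebra.ofCoeff (c m)
  rwa [funext (hη.coeff_vecMul β hc)] at this

end Homoclinic

lemma Memℓp.tendsto_cofinite_zero {α E : Type*} [NormedAddCommGroup E] {p : ℝ≥0∞} (hp₀ : p ≠ 0)
    (hp : p ≠ ∞) {f : α → E} (hf : Memℓp f p) : Tendsto f cofinite (𝓝 0) := by
  have hp' : 0 < p.toReal := ENNReal.toReal_pos hp₀ hp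
  rw [tendsto_zero_iff_norm_tendsto_zero]
  have := (hf.summable hp').tendsto_cofinite_zero.rpow_const (p := p.toReal⁻¹)
    (Or.inr (inv_nonneg.mpr hp'.le))
  simpa [← Real.rpow_mul (norm_nonneg _), mul_inv_cancel₀ hp'.ne',
    Real.zero_rpow (inv_ne_zero hp'.ne')] using this

section RealPart

variable {G : Type*} [Group G]

lemma re_fconv_castZC (a : MonoidAlgebra ℤ G) (ξ : G → ℂ) (g : G) :
    (fconv (castZC a) ξ g).re = pair a.coeff fun h => (ξ (h⁻¹ * g)).re := by
  rw [fconv, castZC, Finsupp.sum_mapRange_index (by simp)]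
  simp [pair, Finsupp.sum, Complex.re_sum]

lemma re_fconvR_castZC (a : MonoidAlgebra ℤ G) (ξ : G → ℂ) (g : G) :
    (fconvR ξ (castZC a) g).re = pair a.coeff fun h => (ξ (g * h⁻¹)).re := by
  rw [fconvR, castZC, Finsupp.sum_mapRange_index (by simp)]
  simp [pair, Finsupp.sum, Complex.re_sum, mul_comm]

lemma isFormalInverse_re {n : ℕ} {f : Matrix (Fin n) (Fin n) (MonoidAlgebra ℤ G)}
    {ξ : Matrix (Fin n) (Fin n) (G → ℂ)}
    (hl : matConv (fun i j => castZC (f i j)) ξ = oneHat G n)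
    (hr : matConvR ξ (fun i j => castZC (f i j)) = oneHat G n) :
    IsFormalInverse f fun i j g => (ξ i j g).re where
  left i j g := by
    simpa [matConv, oneHat, Finset.sum_apply, Complex.re_sum, re_fconv_castZC, vecPair,
      apply_ite Complex.re] using congrArg (fun M => (M i j g).re) hl
  right i j g := by
    simpa [matConvR, oneHat, Finset.sum_apply, Complex.re_sum, re_fconvR_castZC, vecPair,
      apply_ite Complex.re] using congrArg (fun M => (M i j g).re) hr

end RealPart

theorem homoclinic_dense_general {G : Type*} [Group G] {n : ℕ}
    (f : Matrix (Fin n) (Fin n) (MonoidAlgebra ℤ G))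
    (hinv : ∃ ξ : Matrix (Fin n) (Fin n) (lp (fun _ : G => ℂ) 2),
      matConv (fun i j => castZC (f i j)) (fun i j => ⇑(ξ i j)) = oneHat G n ∧
      matConvR (fun i j => ⇑(ξ i j)) (fun i j => castZC (f i j)) = oneHat G n) :
    Xf f ⊆ closure {θ : Fin n → G → AddCircle (1 : ℝ) |
      θ ∈ Xf f ∧ Filter.Tendsto (fun g : G => (fun (l : Fin n) (h : G) => θ l (g⁻¹ * h)))
        Filter.cofinite (nhds 0)} := by
  obtain ⟨ξ, hl, hr⟩ := hinv
  have hη := isFormalInverse_re hl hr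
  have hη₀ (l m : Fin n) : Tendsto (fun g => (ξ l m g).re) cofinite (𝓝 0) :=
    (Complex.continuous_re.tendsto 0).comp
      ((lp.memℓp (ξ l m)).tendsto_cofinite_zero two_ne_zero ENNReal.ofNat_ne_top)
  intro θ hθ
  refine closure_mono ?_ (mem_closure_of_forall_vecPair fun β hβ =>
    hη.vecPair_eq_zero_of_mem_Xf hη₀ hθ hβ)
  rintro _ ⟨α, rfl⟩
  exact ⟨hη.homoclinicHom_mem_Xf α, tendsto_homoclinicHom hη₀ α⟩

/-- If `f ∈ M_n(ℤ[G])` admits an ℓ² formal inverse, then the homoclinic group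
`Δ(X_f) = {θ ∈ X_f : g·θ → 0 along the cofinite filter}` is dense in `X_f`, where
`(g·θ)(l)(h) = θ(l)(g⁻¹h)` and convergence is in the product topology. -/
theorem homoclinic_dense {G : Type*} [Group G] [Countable G] {n : ℕ}
    (f : Matrix (Fin n) (Fin n) (MonoidAlgebra ℤ G))
    (hinv : ∃ ξ : Matrix (Fin n) (Fin n) (lp (fun _ : G => ℂ) 2),
      matConv (fun i j => castZC (f i j)) (fun i j => ⇑(ξ i j)) = oneHat G n ∧
      matConvR (fun i j => ⇑(ξ i j)) (fun i j => castZC (f i j)) = oneHat G n) :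
    Xf f ⊆ closure {θ : Fin n → G → AddCircle (1 : ℝ) |
      θ ∈ Xf f ∧ Filter.Tendsto (fun g : G => (fun (l : Fin n) (h : G) => θ l (g⁻¹ * h)))
        Filter.cofinite (nhds 0)} :=
  homoclinic_dense_general f hinv
end
end

section
/- Let G be a countable discrete group and f an n×n matrix over ℤ[G] admitting an ℓ² formal inverse ξ. Then for α ∈ ℤ[G]^{⊕n}, the following are equivalent: (1) there exists β ∈ ℤ[G]^{⊕n} with α = r(f)β; (2) every value of r(ξ)α is an integer, i.e. (r(ξ)α)(l)(g) ∈ ℤ for all 1 ≤ l ≤ n and g ∈ G. Moreover, in case (1), r(ξ)α equals β regarded as an element of ℓ²(G)^{⊕n}. -/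
open scoped Classical ENNReal

noncomputable section

/-!
If `α = r(f)β`, associativity of convolution gives `r(ξ)α = r(fξ)β = β`, which is
integer-valued. Conversely, `r(ξ)α` lies in `ℓ²`, and an integer-valued `ℓ²` function has
finite support, so `r(ξ)α = β` for some `β ∈ ℤ[G]^{⊕n}`; then `r(f)β = r(ξf)α = α`.
-/

section

variable {G : Type*} [Group G]

lemma fconv_finsetSum_left {ι : Type*} (s : Finset ι) (a : ι → G →₀ ℂ) (ζ : G → ℂ) :
    fconv (∑ i ∈ s, a i) ζ = ∑ i ∈ s, fconv (a i) ζ := by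
  funext g
  simp only [fconv, Finset.sum_apply]
  exact (Finsupp.sum_finsetSum_index (by simp) (by simp [add_mul])).symm

lemma fconv_finsetSum_right {ι : Type*} (a : G →₀ ℂ) (s : Finset ι) (ζ : ι → G → ℂ) :
    fconv a (∑ i ∈ s, ζ i) = ∑ i ∈ s, fconv a (ζ i) := by
  funext g
  simp only [fconv, Finsupp.sum, Finset.sum_apply, Finset.mul_sum]
  exact Finset.sum_comm

lemma fconvR_finsetSum_left {ι : Type*} (s : Finset ι) (ζ : ι → G → ℂ) (a : G →₀ ℂ) :
    fconvR (∑ i ∈ s, ζ i) a = ∑ i ∈ s, fconvR (ζ i) a := by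
  funext g
  simp only [fconvR, Finsupp.sum, Finset.sum_apply, Finset.sum_mul]
  exact Finset.sum_comm

lemma fconvR_fconv (a : G →₀ ℂ) (ζ : G → ℂ) (b : G →₀ ℂ) :
    fconvR (fconv a ζ) b = fconv a (fconvR ζ b) := by
  funext g
  simp only [fconv, fconvR, Finsupp.sum, Finset.sum_mul, Finset.mul_sum, mul_assoc]
  exact Finset.sum_comm

lemma fconv_mul (x y : MonoidAlgebra ℂ G) (ζ : G → ℂ) :
    fconv (x * y).coeff ζ = fconv x.coeff (fconv y.coeff ζ) := by
  funext g
  rw [MonoidAlgebra.mul_def]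
  simp only [fconv, MonoidAlgebra.coeff_finsuppSum, MonoidAlgebra.coeff_single]
  rw [Finsupp.sum_sum_index (by simp) (by simp [add_mul])]
  refine Finsupp.sum_congr fun h _ => ?_
  rw [Finsupp.sum_sum_index (by simp) (by simp [add_mul]), Finsupp.mul_sum]
  refine Finsupp.sum_congr fun k _ => ?_
  rw [Finsupp.sum_single_index (by simp), mul_inv_rev, mul_assoc, mul_assoc]

lemma fconv_zero_right (a : G →₀ ℂ) : fconv a 0 = 0 := by
  funext g; simp [fconv]

lemma fconv_single_one_right (a : G →₀ ℂ) : fconv a (Pi.single 1 1) = a := by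
  funext g
  simp only [fconv, Pi.single_apply, inv_mul_eq_one, mul_ite, mul_one, mul_zero]
  exact Finsupp.sum_ite_self_eq' a g

theorem Memℓp.comp_equiv {α β E : Type*} [NormedAddCommGroup E] {p : ℝ≥0∞} {f : β → E}
    (hf : Memℓp f p) (e : α ≃ β) : Memℓp (f ∘ e) p := by
  rcases p.trichotomy with rfl | rfl | hp
  · exact memℓp_zero (hf.finite_dsupport.preimage e.injective.injOn)
  · exact memℓp_infty ((e.surjective.range_comp fun j => ‖f j‖).symm ▸ hf.bddAbove)
  · exact memℓp_gen (e.summable_iff.mpr (hf.summable hp))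

theorem Memℓp.fconv {p : ℝ≥0∞} (a : G →₀ ℂ) {ζ : G → ℂ} (hζ : Memℓp ζ p) :
    Memℓp (fconv a ζ) p :=
  Memℓp.finsetSum a.support fun h _ => (hζ.comp_equiv (Equiv.mulLeft h⁻¹)).const_mul (a h)

theorem Memℓp.finite_support_of_forall_eq_intCast {α : Type*} {p : ℝ≥0∞} (hp : p ≠ ∞)
    {ζ : α → ℂ} (hζ : Memℓp ζ p) (hint : ∀ g, ∃ z : ℤ, ζ g = z) :
    (Function.support ζ).Finite := by
  rcases eq_or_ne p 0 with rfl | hp0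
  · exact hζ.finite_dsupport
  have hsmall : ∀ᶠ g in Filter.cofinite, ‖ζ g‖ ^ p.toReal < 1 :=
    (hζ.summable (ENNReal.toReal_pos hp0 hp)).tendsto_cofinite_zero.eventually_lt_const one_pos
  refine (Filter.eventually_cofinite.mp hsmall).subset fun g hg => ?_
  obtain ⟨z, hz⟩ := hint g
  have hz0 : z ≠ 0 := by rintro rfl; exact hg (by simpa using hz)
  have : (1 : ℝ) ≤ ‖ζ g‖ := by
    rw [hz, Complex.norm_intCast]; exact_mod_cast Int.one_le_abs hz0
  exact not_lt.mpr (Real.one_le_rpow this ENNReal.toReal_nonneg)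

lemma castZC_eq_coeff_mapRingHom (a : MonoidAlgebra ℤ G) :
    castZC a = (MonoidAlgebra.mapRingHom G (Int.castRingHom ℂ) a).coeff := rfl

lemma castZC_injective : Function.Injective (castZC : MonoidAlgebra ℤ G → G →₀ ℂ) :=
  (Finsupp.mapRange_injective _ _ Int.cast_injective).comp MonoidAlgebra.coeff_injective

lemma castZC_finsetSum {ι : Type*} (s : Finset ι) (a : ι → MonoidAlgebra ℤ G) :
    castZC (∑ i ∈ s, a i) = ∑ i ∈ s, castZC (a i) := by
  simp only [castZC_eq_coeff_mapRingHom, map_sum, MonoidAlgebra.coeff_sum]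

lemma castZC_mul (a b : MonoidAlgebra ℤ G) :
    castZC (a * b) = (MonoidAlgebra.mapRingHom G (Int.castRingHom ℂ) a *
      MonoidAlgebra.mapRingHom G (Int.castRingHom ℂ) b).coeff := by
  rw [castZC_eq_coeff_mapRingHom, map_mul]

lemma exists_castZC_eq {ζ : G → ℂ} (hfin : (Function.support ζ).Finite)
    (hint : ∀ g, ∃ z : ℤ, ζ g = z) : ∃ b : MonoidAlgebra ℤ G, ⇑(castZC b) = ζ := by
  choose z hz using hint
  have hzfin : (Function.support z).Finite :=
    hfin.subset fun g hg hζ => hg (by exact_mod_cast (hz g).symm.trans hζ)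
  exact ⟨.ofCoeff (Finsupp.ofSupportFinite z hzfin), funext fun g => (hz g).symm⟩

lemma fconv_castZC_mul (a b : MonoidAlgebra ℤ G) (ζ : G → ℂ) :
    fconv (castZC (a * b)) ζ = fconv (castZC a) (fconv (castZC b) ζ) := by
  rw [castZC_mul, fconv_mul]; rfl

lemma castZC_mul_apply (a b : MonoidAlgebra ℤ G) (g : G) :
    castZC (a * b) g = fconvR (castZC a) (castZC b) g := by
  rw [castZC_mul]; exact MonoidAlgebra.coeff_mul_apply_right ..

variable {n : ℕ}

/-- The paper's `r(ζ)α`. -/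
def rowConv (ζ : Matrix (Fin n) (Fin n) (G → ℂ)) (α : Fin n → MonoidAlgebra ℤ G) (l : Fin n) :
    G → ℂ :=
  ∑ k, fconv (castZC (α k)) (ζ k l)

lemma rowConv_sum_mul (ζ : Matrix (Fin n) (Fin n) (G → ℂ))
    (f : Matrix (Fin n) (Fin n) (MonoidAlgebra ℤ G)) (β : Fin n → MonoidAlgebra ℤ G) :
    rowConv ζ (fun l => ∑ k, β k * f k l) = rowConv (matConv (fun i j => castZC (f i j)) ζ) β := by
  funext l
  simp only [rowConv, matConv, castZC_finsetSum, fconv_finsetSum_left, fconv_castZC_mul,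
    fconv_finsetSum_right]
  exact Finset.sum_comm

lemma rowConv_oneHat (β : Fin n → MonoidAlgebra ℤ G) (l : Fin n) :
    rowConv (oneHat G n) β l = castZC (β l) := by
  rw [rowConv, Finset.sum_eq_single l]
  · have : oneHat G n l l = Pi.single 1 1 := by
      funext g; simp [oneHat, Pi.single_apply]
    rw [this, fconv_single_one_right]
  · intro j _ hj
    have : oneHat G n j l = 0 := by
      funext g; simp [oneHat, hj]
    rw [this, fconv_zero_right]
  · simp

lemma rowConv_matConvR (ζ : Matrix (Fin n) (Fin n) (G → ℂ))
    (F : Matrix (Fin n) (Fin n) (G →₀ ℂ)) (α : Fin n → MonoidAlgebra ℤ G) (l : Fin n) :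
    rowConv (matConvR ζ F) α l = ∑ k, fconvR (rowConv ζ α k) (F k l) := by
  simp only [rowConv, matConvR, fconv_finsetSum_right, fconvR_finsetSum_left, fconvR_fconv]
  exact Finset.sum_comm

lemma castZC_sum_mul (f : Matrix (Fin n) (Fin n) (MonoidAlgebra ℤ G))
    (β : Fin n → MonoidAlgebra ℤ G) (l : Fin n) :
    ⇑(castZC (∑ k, β k * f k l)) = ∑ k, fconvR (castZC (β k)) (castZC (f k l)) := by
  funext g
  simp only [castZC_finsetSum, Finsupp.finsetSum_apply, Finset.sum_apply, castZC_mul_apply]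

theorem Memℓp.rowConv {p : ℝ≥0∞} {ζ : Matrix (Fin n) (Fin n) (G → ℂ)}
    (hζ : ∀ k l, Memℓp (ζ k l) p) (α : Fin n → MonoidAlgebra ℤ G) (l : Fin n) :
    Memℓp (rowConv ζ α l) p := by
  rw [_root_.rowConv, Finset.sum_fn]
  exact .finsetSum _ fun k _ => (hζ k l).fconv _

lemma rowConv_eq_castZC_of_eq_sum_mul {f : Matrix (Fin n) (Fin n) (MonoidAlgebra ℤ G)}
    {ζ : Matrix (Fin n) (Fin n) (G → ℂ)} (hfζ : matConv (fun i j => castZC (f i j)) ζ = oneHat G n)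
    {α β : Fin n → MonoidAlgebra ℤ G} (hαβ : ∀ l, α l = ∑ k, β k * f k l) (l : Fin n) :
    rowConv ζ α l = castZC (β l) := by
  rw [funext hαβ, rowConv_sum_mul, hfζ, rowConv_oneHat]

theorem exists_eq_sum_mul_iff_rowConv_intCast {p : ℝ≥0∞} (hp : p ≠ ∞)
    {f : Matrix (Fin n) (Fin n) (MonoidAlgebra ℤ G)} {ζ : Matrix (Fin n) (Fin n) (G → ℂ)}
    (hζ : ∀ k l, Memℓp (ζ k l) p)
    (hfζ : matConv (fun i j => castZC (f i j)) ζ = oneHat G n)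
    (hζf : matConvR ζ (fun i j => castZC (f i j)) = oneHat G n) (α : Fin n → MonoidAlgebra ℤ G) :
    (∃ β : Fin n → MonoidAlgebra ℤ G, ∀ l, α l = ∑ k, β k * f k l) ↔
      ∀ l g, ∃ z : ℤ, rowConv ζ α l g = z := by
  refine ⟨fun ⟨β, hβ⟩ l g => ⟨_, congrFun (rowConv_eq_castZC_of_eq_sum_mul hfζ hβ l) g⟩,
    fun hint => ?_⟩
  have hlift (l : Fin n) : ∃ b : MonoidAlgebra ℤ G, ⇑(castZC b) = rowConv ζ α l :=
    exists_castZC_eq ((Memℓp.rowConv hζ α l).finite_support_of_forall_eq_intCast hp (hint l))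
      (hint l)
  choose β hβ using hlift
  refine ⟨β, fun l => castZC_injective (DFunLike.coe_injective ?_)⟩
  calc ⇑(castZC (α l))
      = rowConv (matConvR ζ fun i j => castZC (f i j)) α l := by rw [hζf, rowConv_oneHat]
    _ = ∑ k, fconvR (rowConv ζ α k) (castZC (f k l)) := rowConv_matConvR ζ _ α l
    _ = castZC (∑ k, β k * f k l) := by simp only [castZC_sum_mul, hβ]

end

theorem integrality_criterion_general {G : Type*} [Group G] {n : ℕ}
    (f : Matrix (Fin n) (Fin n) (MonoidAlgebra ℤ G))
    (ξ : Matrix (Fin n) (Fin n) (lp (fun _ : G => ℂ) 2))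
    (hξ : matConv (fun i j => castZC (f i j)) (fun i j => ⇑(ξ i j)) = oneHat G n ∧
          matConvR (fun i j => ⇑(ξ i j)) (fun i j => castZC (f i j)) = oneHat G n)
    (α : Fin n → MonoidAlgebra ℤ G) :
    ((∃ β : Fin n → MonoidAlgebra ℤ G, ∀ l, α l = ∑ k, β k * f k l) ↔
      (∀ (l : Fin n) (g : G), ∃ z : ℤ,
        (∑ k, fconv (castZC (α k)) (⇑(ξ k l))) g = (z : ℂ))) ∧
    (∀ β : Fin n → MonoidAlgebra ℤ G, (∀ l, α l = ∑ k, β k * f k l) →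
      ∀ (l : Fin n) (g : G),
        (∑ k, fconv (castZC (α k)) (⇑(ξ k l))) g = ((β l |>.coeff g : ℤ) : ℂ)) :=
  ⟨exists_eq_sum_mul_iff_rowConv_intCast ENNReal.ofNat_ne_top (fun k l => lp.memℓp (ξ k l))
      hξ.1 hξ.2 α,
    fun _ hβ l g => congrFun (rowConv_eq_castZC_of_eq_sum_mul hξ.1 hβ l) g⟩

/-- Let `f ∈ M_n(ℤ[G])` with ℓ² formal inverse `ξ`.  Then for `α ∈ ℤ[G]^{⊕n}` the
following are equivalent: (1) `α = r(f)β` for some `β ∈ ℤ[G]^{⊕n}` (where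
`(r(f)β)(l) = ∑_k β(k) * f_{kl}`, multiplication in `ℤ[G]`); (2) every value of `r(ξ)α`
is an integer.  Moreover, in case (1), `r(ξ)α = β̂`.  Here
`(r(ξ)α)(l)(g) = ∑_k ∑_h α(k)(h) ξ_{kl}(h⁻¹g)`. -/
theorem integrality_criterion {G : Type*} [Group G] [Countable G] {n : ℕ}
    (f : Matrix (Fin n) (Fin n) (MonoidAlgebra ℤ G))
    (ξ : Matrix (Fin n) (Fin n) (lp (fun _ : G => ℂ) 2))
    (hξ : matConv (fun i j => castZC (f i j)) (fun i j => ⇑(ξ i j)) = oneHat G n ∧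
          matConvR (fun i j => ⇑(ξ i j)) (fun i j => castZC (f i j)) = oneHat G n)
    (α : Fin n → MonoidAlgebra ℤ G) :
    ((∃ β : Fin n → MonoidAlgebra ℤ G, ∀ l, α l = ∑ k, β k * f k l) ↔
      (∀ (l : Fin n) (g : G), ∃ z : ℤ,
        (∑ k, fconv (castZC (α k)) (⇑(ξ k l))) g = (z : ℂ))) ∧
    (∀ β : Fin n → MonoidAlgebra ℤ G, (∀ l, α l = ∑ k, β k * f k l) →
      ∀ (l : Fin n) (g : G),
        (∑ k, fconv (castZC (α k)) (⇑(ξ k l))) g = ((β l |>.coeff g : ℤ) : ℂ)) :=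
  integrality_criterion_general f ξ hξ α
end
end
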